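/- arXiv:2410.16142 — 3 statements merged into one kernel-verified Lean document; each statement's English description precedes it below -/
import Mathlib

section
/- Let D be an integral domain with quotient field K, E ⊆ K nonempty, and I a nonzero ideal of D. Then (I·Int^R(E,D))_t ∩ D = I_t. In particular, if 𝔄 is a t-ideal of Int^R(E,D) with 𝔄 ∩ D ≠ (0), then 𝔄 ∩ D is a t-ideal of D. -/
open Polynomial

variable {K : Type*} [Field K]

/-- Evaluation of a rational function at a point of `K`. -/
noncomputable def rfEval (e : K) (φ : RatFunc K) : K :=
  RatFunc.eval (RingHom.id K) e φ

/-- `φ` is defined at every point of `E` (its reduced denominator does not vanish)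
and maps `E` into `T`. -/
def MapsInto (E T : Set K) (φ : RatFunc K) : Prop :=
  ∀ e ∈ E, Polynomial.eval e φ.denom ≠ 0 ∧ rfEval e φ ∈ T

theorem eval₂_id_eq_eval (e : K) (p : K[X]) :
    p.eval₂ (RingHom.id K) e = p.eval e := by rfl

theorem denom_eval_ne_zero_of_dvd {x y z : RatFunc K} (h : z.denom ∣ x.denom * y.denom)
    {e : K} (hx : Polynomial.eval e x.denom ≠ 0) (hy : Polynomial.eval e y.denom ≠ 0) :
    Polynomial.eval e z.denom ≠ 0 := by
  obtain ⟨c, hc⟩ := h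
  intro h0
  apply mul_ne_zero hx hy
  have : Polynomial.eval e (x.denom * y.denom) = Polynomial.eval e z.denom * Polynomial.eval e c := by
    rw [hc, Polynomial.eval_mul]
  rw [Polynomial.eval_mul] at this
  rw [this, h0, zero_mul]

theorem rfEval_add {x y : RatFunc K} {e : K} (hx : Polynomial.eval e x.denom ≠ 0)
    (hy : Polynomial.eval e y.denom ≠ 0) : rfEval e (x + y) = rfEval e x + rfEval e y := by
  apply RatFunc.eval_add <;> rw [eval₂_id_eq_eval] <;> assumption

theorem rfEval_mul {x y : RatFunc K} {e : K} (hx : Polynomial.eval e x.denom ≠ 0)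
    (hy : Polynomial.eval e y.denom ≠ 0) : rfEval e (x * y) = rfEval e x * rfEval e y := by
  apply RatFunc.eval_mul <;> rw [eval₂_id_eq_eval] <;> assumption

theorem denom_const (c : K) : (algebraMap K (RatFunc K) c).denom = 1 := by
  have : algebraMap K (RatFunc K) c = algebraMap K[X] (RatFunc K) (Polynomial.C c) := by
    rw [RatFunc.algebraMap_C]; rfl
  rw [this, RatFunc.denom_algebraMap]

theorem rfEval_const (e c : K) : rfEval e (algebraMap K (RatFunc K) c) = c := by
  have : algebraMap K (RatFunc K) c = RatFunc.C c := rfl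
  rw [rfEval, this, RatFunc.eval_C]; rfl

/-- The ring of `D`-valued rational functions on `E`:
`Int^R(E,D) = {φ ∈ K(X) : φ(E) ⊆ D}`. -/
def IntR (E : Set K) (D : Subring K) : Subring (RatFunc K) where
  carrier := {φ | MapsInto E (D : Set K) φ}
  zero_mem' := by
    intro e _
    constructor
    · rw [RatFunc.denom_zero]; simp
    · have : rfEval e (0 : RatFunc K) = 0 := by rw [rfEval, RatFunc.eval_zero]
      rw [this]; exact D.zero_mem
  one_mem' := by
    intro e _
    constructor
    · rw [RatFunc.denom_one]; simp
    · have : rfEval e (1 : RatFunc K) = 1 := by rw [rfEval, RatFunc.eval_one]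
      rw [this]; exact D.one_mem
  add_mem' := by
    intro x y hx hy e he
    obtain ⟨hxd, hxv⟩ := hx e he
    obtain ⟨hyd, hyv⟩ := hy e he
    refine ⟨denom_eval_ne_zero_of_dvd (RatFunc.denom_add_dvd x y) hxd hyd, ?_⟩
    rw [rfEval_add hxd hyd]; exact D.add_mem hxv hyv
  mul_mem' := by
    intro x y hx hy e he
    obtain ⟨hxd, hxv⟩ := hx e he
    obtain ⟨hyd, hyv⟩ := hy e he
    refine ⟨denom_eval_ne_zero_of_dvd (RatFunc.denom_mul_dvd x y) hxd hyd, ?_⟩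
    rw [rfEval_mul hxd hyd]; exact D.mul_mem hxv hyv
  neg_mem' := by
    intro x hx e he
    obtain ⟨hxd, hxv⟩ := hx e he
    have hconst : Polynomial.eval e (algebraMap K (RatFunc K) (-1 : K)).denom ≠ 0 := by
      rw [denom_const]; simp
    have hneg : -x = algebraMap K (RatFunc K) (-1 : K) * x := by
      rw [map_neg, map_one, neg_one_mul]
    constructor
    · rw [hneg]
      exact denom_eval_ne_zero_of_dvd (RatFunc.denom_mul_dvd _ x)
        (by rw [denom_const]; simp) hxd
    · rw [hneg, rfEval_mul hconst hxd, rfEval_const]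
      rw [neg_one_mul]
      exact D.neg_mem hxv

theorem mem_IntR_iff {E : Set K} {D : Subring K} {φ : RatFunc K} :
    φ ∈ IntR E D ↔ MapsInto E (D : Set K) φ := Iff.rfl

theorem const_mem_IntR {E : Set K} {D : Subring K} {d : K} (hd : d ∈ D) :
    algebraMap K (RatFunc K) d ∈ IntR E D := by
  intro e _
  refine ⟨by rw [denom_const]; simp, ?_⟩
  rw [rfEval_const]; exact hd

/-- The canonical map `D → Int^R(E,D)` sending `d` to the constant rational function `d`. -/
noncomputable def constHom (E : Set K) (D : Subring K) : D →+* IntR E D where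
  toFun d := ⟨algebraMap K (RatFunc K) (d : K), const_mem_IntR d.2⟩
  map_one' := by ext; simp
  map_mul' x y := by ext; simp
  map_zero' := by ext; simp
  map_add' x y := by ext; simp

/-- Evaluation at a point `a ∈ E`, as a ring homomorphism `Int^R(E,D) → D`. -/
noncomputable def evalHom (E : Set K) (D : Subring K) (a : K) (ha : a ∈ E) :
    IntR E D →+* D where
  toFun φ := ⟨rfEval a φ.1, (φ.2 a ha).2⟩
  map_one' := by
    ext
    show rfEval a (1 : RatFunc K) = 1
    rw [rfEval, RatFunc.eval_one]
  map_mul' x y := by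
    ext
    exact rfEval_mul (x.2 a ha).1 (y.2 a ha).1
  map_zero' := by
    ext
    show rfEval a (0 : RatFunc K) = 0
    rw [rfEval, RatFunc.eval_zero]
  map_add' x y := by
    ext
    exact rfEval_add (x.2 a ha).1 (y.2 a ha).1

/-- `K` is the quotient field of `D`. -/
def IsQuotField (D : Subring K) : Prop :=
  ∀ x : K, ∃ a ∈ D, ∃ b ∈ D, b ≠ 0 ∧ x = a / b
/-- The localization `S⁻¹A` of a subring `A` of a field at a multiplicative submonoid
`S` of `A` not containing `0`, realized as a subring of the ambient field. -/
def locSubring {F : Type*} [Field F] (A : Subring F) (S : Submonoid A)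
    (hS : ∀ s ∈ S, s ≠ (0 : A)) : Subring F where
  carrier := {x | ∃ a : A, ∃ s ∈ S, x = (a : F) / (s : F)}
  zero_mem' := ⟨0, 1, S.one_mem, by simp⟩
  one_mem' := ⟨1, 1, S.one_mem, by simp⟩
  add_mem' := by
    rintro x y ⟨a, s, hs, rfl⟩ ⟨b, t, ht, rfl⟩
    refine ⟨a * t + b * s, s * t, S.mul_mem hs ht, ?_⟩
    have hs0 : (s : F) ≠ 0 := fun h => hS s hs (Subtype.ext h)
    have ht0 : (t : F) ≠ 0 := fun h => hS t ht (Subtype.ext h)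
    push_cast
    field_simp
  mul_mem' := by
    rintro x y ⟨a, s, hs, rfl⟩ ⟨b, t, ht, rfl⟩
    refine ⟨a * b, s * t, S.mul_mem hs ht, ?_⟩
    push_cast
    field_simp
  neg_mem' := by
    rintro x ⟨a, s, hs, rfl⟩
    exact ⟨-a, s, hs, by push_cast; ring⟩

/-- The "inverse" `{x ∈ F : xS ⊆ A}` of a subset `S` of a field `F`, relative to
a subring `A` of `F`. -/
def dualSet {F : Type*} [Field F] (A : Subring F) (S : Set F) : Set F :=
  {x | ∀ y ∈ S, x * y ∈ A}

/-- An ideal of a subring of `F`, viewed as a subset of `F`. -/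
def idealSet {F : Type*} [Field F] (A : Subring F) (I : Ideal A) : Set F :=
  (fun a : A => (a : F)) '' (I : Set A)

/-- The `v`-closure (divisorial closure) of a subset of `F` relative to a subring `A`. -/
def vSet {F : Type*} [Field F] (A : Subring F) (S : Set F) : Set F :=
  dualSet A (dualSet A S)

/-- The `t`-closure of an ideal of a subring `A` of `F`, as a subset of `F`. -/
def tSet {F : Type*} [Field F] (A : Subring F) (I : Ideal A) : Set F :=
  {x | ∃ J : Ideal A, J ≤ I ∧ J.FG ∧ J ≠ ⊥ ∧ x ∈ vSet A (idealSet A J)}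

theorem primeCompl_ne_zero {R : Type*} [CommRing R] [Nontrivial R] (P : Ideal R) [P.IsPrime] :
    ∀ s ∈ P.primeCompl, s ≠ (0 : R) := by
  intro s hs h0
  exact hs (by rw [h0]; exact P.zero_mem)

section ClosureOperations

variable {F : Type*} [Field F] (A : Subring F)

theorem idealSet_mono {I I' : Ideal A} (h : I ≤ I') : idealSet A I ⊆ idealSet A I' :=
  Set.image_mono h

theorem dualSet_anti {S T : Set F} (h : S ⊆ T) : dualSet A T ⊆ dualSet A S :=
  fun _ hx y hy => hx y (h hy)

theorem subset_vSet (S : Set F) : S ⊆ vSet A S := fun x hx y hy => by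
  simpa only [mul_comm] using hy x hx

theorem vSet_idealSet_subset (J : Ideal A) : vSet A (idealSet A J) ⊆ (A : Set F) := by
  intro x hx
  have hone : (1 : F) ∈ dualSet A (idealSet A J) := by
    rintro _ ⟨a, -, rfl⟩
    simp
  simpa using hx 1 hone

theorem dualSet_idealSet_span (S : Set A) :
    dualSet A (idealSet A (Ideal.span S)) = dualSet A ((↑) '' S) := by
  refine (dualSet_anti A (Set.image_mono Ideal.subset_span)).antisymm ?_
  rintro x hx _ ⟨a, ha, rfl⟩
  induction ha using Submodule.span_induction with
  | mem a ha => exact hx _ ⟨a, ha, rfl⟩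
  | zero => simp
  | add a b _ _ ha hb => simpa [mul_add] using A.add_mem ha hb
  | smul r a _ ha => simpa [mul_left_comm] using A.mul_mem r.2 ha

theorem tSet_mono {I I' : Ideal A} (h : I ≤ I') : tSet A I ⊆ tSet A I' := by
  rintro x ⟨J, hJI, hJ⟩
  exact ⟨J, hJI.trans h, hJ⟩

theorem tSet_subset (I : Ideal A) : tSet A I ⊆ (A : Set F) := by
  rintro x ⟨J, -, -, -, hx⟩
  exact vSet_idealSet_subset A J hx

/-- Each `a ∈ I` lies in `(a, b)_v` for a nonzero `b ∈ I`; the ideal `(a, b)` is nonzero even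
when `a = 0`. -/
theorem idealSet_subset_tSet {I : Ideal A} (hI : I ≠ ⊥) : idealSet A I ⊆ tSet A I := by
  rintro _ ⟨a, ha, rfl⟩
  obtain ⟨b, hbI, hb⟩ := Submodule.exists_mem_ne_zero_of_ne_bot hI
  have hb_mem : b ∈ Ideal.span {a, b} := Ideal.subset_span (by simp)
  refine ⟨Ideal.span {a, b}, Ideal.span_le.2 (by simp [Set.insert_subset_iff, ha, hbI]),
    Submodule.fg_span (Set.toFinite _), fun h => hb (by simpa [h] using hb_mem),
    subset_vSet A _ ⟨a, Ideal.subset_span (by simp), rfl⟩⟩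

end ClosureOperations

theorem Ideal.exists_fg_le_map {A B : Type*} [CommRing A] [CommRing B] (f : A →+* B)
    (I : Ideal A) {𝔍 : Ideal B} (hle : 𝔍 ≤ I.map f) (hfg : 𝔍.FG) :
    ∃ J : Ideal A, J.FG ∧ J ≤ I ∧ 𝔍 ≤ J.map f := by
  classical
  obtain ⟨s, rfl⟩ := hfg
  obtain ⟨T, hTI, hsT⟩ := Submodule.subset_span_finite_of_subset_span (Ideal.span_le.1 hle)
  obtain ⟨T', hT'I, rfl⟩ := Finset.subset_set_image_iff.1 hTI
  refine ⟨Ideal.span T', ⟨T', rfl⟩, Ideal.span_le.2 hT'I, ?_⟩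
  rw [Ideal.map_span, Ideal.span_le]
  simpa using hsT

section RationalFunctions

theorem eval_denom_algebraMap_mul_ne_zero {φ : RatFunc K} {e : K} (c : K)
    (h : φ.denom.eval e ≠ 0) : (algebraMap K (RatFunc K) c * φ).denom.eval e ≠ 0 :=
  denom_eval_ne_zero_of_dvd (RatFunc.denom_mul_dvd _ φ) (by simp) h

theorem eval_denom_ne_zero_of_algebraMap_mul {φ : RatFunc K} {e c : K} (hc : c ≠ 0)
    (h : (algebraMap K (RatFunc K) c * φ).denom.eval e ≠ 0) : φ.denom.eval e ≠ 0 := by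
  have := eval_denom_algebraMap_mul_ne_zero c⁻¹ h
  rwa [← mul_assoc, ← map_mul, inv_mul_cancel₀ hc, map_one, one_mul] at this

theorem rfEval_algebraMap_mul {φ : RatFunc K} {e : K} (c : K) (h : φ.denom.eval e ≠ 0) :
    rfEval e (algebraMap K (RatFunc K) c * φ) = c * rfEval e φ := by
  rw [rfEval_mul (by simp) h, rfEval_const]

end RationalFunctions

section IntR

variable {E : Set K} {D : Subring K}

theorem algebraMap_mem_IntR_iff (hE : E.Nonempty) {x : K} :
    algebraMap K (RatFunc K) x ∈ IntR E D ↔ x ∈ D := by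
  refine ⟨fun h => ?_, const_mem_IntR⟩
  obtain ⟨a, ha⟩ := hE
  have := (h a ha).2
  rwa [rfEval_const] at this

theorem constHom_injective : Function.Injective (constHom E D) := fun _ _ h =>
  Subtype.ext ((algebraMap K (RatFunc K)).injective (congrArg Subtype.val h))

theorem algebraMap_mem_dualSet_map {J : Ideal D} {z : K} (hz : z ∈ dualSet D (idealSet D J)) :
    algebraMap K (RatFunc K) z ∈
      dualSet (IntR E D) (idealSet (IntR E D) (J.map (constHom E D))) := by
  rw [Ideal.map, dualSet_idealSet_span]
  rintro _ ⟨_, ⟨c, hc, rfl⟩, rfl⟩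
  show algebraMap K (RatFunc K) z * algebraMap K (RatFunc K) c ∈ IntR E D
  rw [← map_mul]
  exact const_mem_IntR (hz _ ⟨c, hc, rfl⟩)

/-- If `φ·J ⊆ Int^R(E,D)`, then a nonzero `c ∈ J` shows that `φ` is defined on `E`, and then
`φ(e)·J ⊆ D` for every `e ∈ E`. -/
theorem algebraMap_mem_vSet_map {J : Ideal D} (hJ : J ≠ ⊥) {x : K}
    (hx : x ∈ vSet D (idealSet D J)) :
    algebraMap K (RatFunc K) x ∈
      vSet (IntR E D) (idealSet (IntR E D) (J.map (constHom E D))) := by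
  intro φ hφ
  have hφJ : ∀ c ∈ J, algebraMap K (RatFunc K) c * φ ∈ IntR E D := fun c hc => by
    rw [mul_comm]
    exact hφ _ ⟨constHom E D c, Ideal.mem_map_of_mem _ hc, rfl⟩
  obtain ⟨c₀, hc₀J, hc₀⟩ := Submodule.exists_mem_ne_zero_of_ne_bot hJ
  intro e he
  have hφe : φ.denom.eval e ≠ 0 :=
    eval_denom_ne_zero_of_algebraMap_mul (fun h => hc₀ (Subtype.ext h)) (hφJ c₀ hc₀J e he).1
  have hval : rfEval e φ ∈ dualSet D (idealSet D J) := by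
    rintro _ ⟨c, hc, rfl⟩
    have := (hφJ c hc e he).2
    rwa [rfEval_algebraMap_mul _ hφe, mul_comm] at this
  refine ⟨eval_denom_algebraMap_mul_ne_zero x hφe, ?_⟩
  rw [rfEval_algebraMap_mul x hφe]
  exact hx _ hval

theorem mem_vSet_of_algebraMap_mem_vSet (hE : E.Nonempty) {J : Ideal D}
    {𝔍 : Ideal (IntR E D)} (h𝔍 : 𝔍 ≤ J.map (constHom E D)) {x : K}
    (hx : algebraMap K (RatFunc K) x ∈ vSet (IntR E D) (idealSet (IntR E D) 𝔍)) :
    x ∈ vSet D (idealSet D J) := by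
  intro z hz
  rw [← algebraMap_mem_IntR_iff hE, map_mul]
  exact hx _ (dualSet_anti _ (idealSet_mono _ h𝔍) (algebraMap_mem_dualSet_map hz))

theorem algebraMap_mem_tSet_map {I : Ideal D} {x : K} (hx : x ∈ tSet D I) :
    algebraMap K (RatFunc K) x ∈ tSet (IntR E D) (I.map (constHom E D)) := by
  obtain ⟨J, hJI, hJfg, hJ, hxv⟩ := hx
  refine ⟨J.map (constHom E D), Ideal.map_mono hJI, hJfg.map _, ?_, algebraMap_mem_vSet_map hJ hxv⟩
  rwa [Ne, Ideal.map_eq_bot_iff_of_injective constHom_injective]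

/-- A finitely generated `𝔍 ≤ I·Int^R(E,D)` lies in `J·Int^R(E,D)` for a finitely generated
`J ≤ I`, and evaluation at a point of `E` brings `(J·Int^R(E,D))_v ∩ D` back into `J_v`. -/
theorem algebraMap_preimage_tSet_map_inter (hE : E.Nonempty) (I : Ideal D) :
    algebraMap K (RatFunc K) ⁻¹' tSet (IntR E D) (I.map (constHom E D)) ∩ (D : Set K) =
      tSet D I := by
  ext x
  constructor
  · rintro ⟨⟨𝔍, h𝔍I, h𝔍fg, h𝔍, hxv⟩, -⟩
    obtain ⟨J, hJfg, hJI, h𝔍J⟩ := Ideal.exists_fg_le_map (constHom E D) I h𝔍I h𝔍fg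
    have hJ : J ≠ ⊥ := by
      rintro rfl
      exact h𝔍 (le_bot_iff.1 (h𝔍J.trans_eq Ideal.map_bot))
    exact ⟨J, hJI, hJfg, hJ, mem_vSet_of_algebraMap_mem_vSet hE h𝔍J hxv⟩
  · exact fun hx => ⟨algebraMap_mem_tSet_map hx, tSet_subset D I hx⟩

theorem mem_idealSet_comap_of_algebraMap_mem {𝔄 : Ideal (IntR E D)} {x : K} (hx : x ∈ D)
    (h : algebraMap K (RatFunc K) x ∈ idealSet (IntR E D) 𝔄) :
    x ∈ idealSet D (𝔄.comap (constHom E D)) := by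
  obtain ⟨ρ, hρ, hρx⟩ := h
  refine ⟨⟨x, hx⟩, ?_, rfl⟩
  show constHom E D ⟨x, hx⟩ ∈ 𝔄
  rwa [show constHom E D ⟨x, hx⟩ = ρ from Subtype.ext hρx.symm]

end IntR

theorem t_of_extension_cap_eq_t_general {K : Type*} [Field K] (D : Subring K) (E : Set K)
    (hEne : E.Nonempty) :
    (∀ I : Ideal D, I ≠ ⊥ →
      algebraMap K (RatFunc K) ⁻¹'
          tSet (IntR E D) (Ideal.map (constHom E D) I) ∩ (D : Set K) = tSet D I) ∧
    (∀ 𝔄 : Ideal (IntR E D), tSet (IntR E D) 𝔄 = idealSet (IntR E D) 𝔄 →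
      Ideal.comap (constHom E D) 𝔄 ≠ ⊥ →
      tSet D (Ideal.comap (constHom E D) 𝔄) = idealSet D (Ideal.comap (constHom E D) 𝔄)) := by
  refine ⟨fun I _ => algebraMap_preimage_tSet_map_inter hEne I, fun 𝔄 h𝔄 hne => ?_⟩
  refine (idealSet_subset_tSet D hne).antisymm' fun x hx => ?_
  rw [← algebraMap_preimage_tSet_map_inter hEne] at hx
  obtain ⟨hxt, hxD⟩ := hx
  have hx𝔄 := tSet_mono _ Ideal.map_comap_le hxt
  rw [h𝔄] at hx𝔄
  exact mem_idealSet_comap_of_algebraMap_mem hxD hx𝔄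

/-- for a nonzero ideal `I` of `D`, `(I·Int^R(E,D))_t ∩ D = I_t`; in
particular the contraction of a `t`-ideal `𝔄` of `Int^R(E,D)` with `𝔄 ∩ D ≠ 0` is a
`t`-ideal of `D`. -/
theorem t_of_extension_cap_eq_t {K : Type*} [Field K] (D : Subring K) (E : Set K)
    (hFrac : IsQuotField D) (hEne : E.Nonempty) :
    (∀ I : Ideal D, I ≠ ⊥ →
      algebraMap K (RatFunc K) ⁻¹'
          tSet (IntR E D) (Ideal.map (constHom E D) I) ∩ (D : Set K) = tSet D I) ∧
    (∀ 𝔄 : Ideal (IntR E D), tSet (IntR E D) 𝔄 = idealSet (IntR E D) 𝔄 →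
      Ideal.comap (constHom E D) 𝔄 ≠ ⊥ →
      tSet D (Ideal.comap (constHom E D) 𝔄) = idealSet D (Ideal.comap (constHom E D) 𝔄)) :=
  t_of_extension_cap_eq_t_general D E hEne
end

section
/- Let D be an integral domain with quotient field K and E ⊆ K nonempty. The ring Int^R(E,D) is integrally closed (in its quotient field K(X)) if and only if D is integrally closed (in K). -/
open Polynomial

variable {K : Type*} [Field K]

/-! Evaluation at a point `e` is a ring homomorphism on the local ring `O_e` of `K(X)` at `e`,
which is a valuation ring and hence integrally closed. An element `φ` integral over `Int^R(E,D)`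
is therefore regular at every `e ∈ E`, and evaluating its integral equation at `e` shows that
`φ(e)` is integral over `D`. Conversely, a constant `x` integral over `D` is integral over
`Int^R(E,D)`, and evaluating at a point of `E` brings it back to `D`. -/

theorem IsIntegral.of_subring_le {S : Type*} [CommRing S] {A B : Subring S} (hAB : A ≤ B)
    {x : S} (hx : IsIntegral A x) : IsIntegral B x :=
  hx.map_of_comp_eq (Subring.inclusion hAB) (RingHom.id S) rfl

theorem IsIntegral.map_of_subring_le {S T R' : Type*} [CommRing S] [Ring T] [CommRing R']
    [Algebra R' T] {R A : Subring S} (hRA : R ≤ A) (f : A →+* T) (g : R →+* R')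
    (hfg : f.comp (Subring.inclusion hRA) = (algebraMap R' T).comp g)
    {x : S} (hxA : x ∈ A) (hx : IsIntegral R x) : IsIntegral R' (f ⟨x, hxA⟩) := by
  obtain ⟨p, hmonic, hpx⟩ := hx
  refine ⟨p.map g, hmonic.map g, ?_⟩
  have hpA : p.eval₂ (Subring.inclusion hRA) ⟨x, hxA⟩ = 0 :=
    A.subtype_injective (by rw [Polynomial.hom_eval₂, map_zero]; exact hpx)
  rw [Polynomial.eval₂_map, ← hfg, ← Polynomial.hom_eval₂, hpA, map_zero]

theorem ValuationSubring.mem_of_isIntegral {F : Type*} [Field F] (V : ValuationSubring F)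
    {x : F} (hx : IsIntegral V x) : x ∈ V := by
  obtain ⟨y, rfl⟩ := IsIntegrallyClosed.isIntegral_iff.mp hx
  exact y.2

theorem RatFunc.eval_denom_inv_ne_zero {φ : RatFunc K} {e : K}
    (h : Polynomial.eval e φ.denom = 0) : Polynomial.eval e φ⁻¹.denom ≠ 0 := by
  have hφ : φ ≠ 0 := by
    rintro rfl
    simp at h
  have hnum : Polynomial.eval e φ.num ≠ 0 := by
    obtain ⟨u, v, huv⟩ := RatFunc.isCoprime_num_denom φ
    intro h0
    simpa [h0, h] using congrArg (Polynomial.eval e) huv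
  obtain ⟨c, hc⟩ := RatFunc.denom_inv_dvd hφ
  intro h0
  rw [hc, Polynomial.eval_mul, h0, zero_mul] at hnum
  exact hnum rfl

theorem mem_intR_singleton_top {e : K} {φ : RatFunc K} :
    φ ∈ IntR {e} (⊤ : Subring K) ↔ Polynomial.eval e φ.denom ≠ 0 := by
  simp [mem_IntR_iff, MapsInto]

noncomputable def valuationSubringAt (e : K) : ValuationSubring (RatFunc K) where
  toSubring := IntR {e} ⊤
  mem_or_inv_mem' φ := by
    show φ ∈ IntR {e} ⊤ ∨ φ⁻¹ ∈ IntR {e} ⊤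
    rw [mem_intR_singleton_top, mem_intR_singleton_top]
    by_cases h : Polynomial.eval e φ.denom = 0
    · exact Or.inr (RatFunc.eval_denom_inv_ne_zero h)
    · exact Or.inl h

section IntR

variable {E : Set K} {D : Subring K} {e : K}

theorem intR_le_valuationSubringAt (he : e ∈ E) :
    IntR E D ≤ (valuationSubringAt e).toSubring := fun _ hφ =>
  mem_intR_singleton_top.mpr (hφ e he).1

theorem mem_valuationSubringAt_of_isIntegral (he : e ∈ E) {φ : RatFunc K}
    (hφ : IsIntegral (IntR E D) φ) : φ ∈ valuationSubringAt e :=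
  (valuationSubringAt e).mem_of_isIntegral (hφ.of_subring_le (intR_le_valuationSubringAt he))

theorem isIntegral_rfEval (he : e ∈ E) {φ : RatFunc K} (hφ : IsIntegral (IntR E D) φ) :
    IsIntegral D (rfEval e φ) :=
  hφ.map_of_subring_le (intR_le_valuationSubringAt he)
    ((Subring.topEquiv : (⊤ : Subring K) ≃+* K).toRingHom.comp (evalHom {e} ⊤ e rfl))
    (evalHom E D e he) rfl (mem_valuationSubringAt_of_isIntegral he hφ)

theorem isIntegral_const_of_isIntegral {x : K} (hx : IsIntegral D x) :
    IsIntegral (IntR E D) (algebraMap K (RatFunc K) x) :=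
  hx.map_of_comp_eq (constHom E D) (algebraMap K (RatFunc K)) rfl

theorem mem_of_const_mem_intR (he : e ∈ E) {x : K}
    (hx : algebraMap K (RatFunc K) x ∈ IntR E D) : x ∈ D := by
  have hxe := (hx e he).2
  rwa [rfEval_const] at hxe

end IntR

theorem intR_integrallyClosed_iff_general {K : Type*} [Field K] (D : Subring K) (E : Set K)
    (hEne : E.Nonempty) :
    IsIntegrallyClosedIn (IntR E D) (RatFunc K) ↔ IsIntegrallyClosedIn D K := by
  simp only [Subring.isIntegrallyClosedIn_iff]
  constructor
  · intro hcl x hx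
    obtain ⟨e, he⟩ := hEne
    exact mem_of_const_mem_intR he (hcl (isIntegral_const_of_isIntegral hx))
  · intro hcl φ hφ e he
    exact ⟨mem_intR_singleton_top.mp (mem_valuationSubringAt_of_isIntegral he hφ),
      hcl (isIntegral_rfEval he hφ)⟩

/-- `Int^R(E,D)` is integrally closed in `K(X)` iff `D` is integrally
closed in `K`. -/
theorem intR_integrallyClosed_iff {K : Type*} [Field K] (D : Subring K) (E : Set K)
    (hFrac : IsQuotField D) (hEne : E.Nonempty) :
    IsIntegrallyClosedIn (IntR E D) (RatFunc K) ↔ IsIntegrallyClosedIn D K :=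
  intR_integrallyClosed_iff_general D E hEne
end

section
/- Let D be an integral domain with quotient field K and E a nonempty subset of D. Then Int^R(E,D) is faithfully flat as a D[X]-module if and only if Int^R(E,D) = D[X]. -/
open Polynomial

variable {K : Type*} [Field K]

theorem eval_mem_of_coeff_mem {K : Type*} [Field K] {D : Subring K} {p : Polynomial K}
    (hp : ∀ i, p.coeff i ∈ D) {e : K} (he : e ∈ D) : p.eval e ∈ D := by
  rw [Polynomial.eval_eq_sum_range]
  exact Subring.sum_mem D fun i _ => D.mul_mem (hp i) (D.pow_mem he i)

/-- `D[X]`: the polynomials with coefficients in `D`, as a subring of `K(X)`. -/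
def polyDRing {K : Type*} [Field K] (D : Subring K) : Subring (RatFunc K) where
  carrier := {φ | ∃ p : Polynomial K, (∀ i, p.coeff i ∈ D) ∧
    φ = algebraMap (Polynomial K) (RatFunc K) p}
  zero_mem' := ⟨0, fun i => by rw [Polynomial.coeff_zero]; exact D.zero_mem, by simp⟩
  one_mem' := ⟨1, fun i => by
      rw [Polynomial.coeff_one]
      split_ifs
      exacts [D.one_mem, D.zero_mem], by simp⟩
  add_mem' := by
    rintro x y ⟨p, hp, rfl⟩ ⟨q, hq, rfl⟩
    exact ⟨p + q, fun i => by rw [Polynomial.coeff_add]; exact D.add_mem (hp i) (hq i),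
      by rw [map_add]⟩
  mul_mem' := by
    rintro x y ⟨p, hp, rfl⟩ ⟨q, hq, rfl⟩
    refine ⟨p * q, fun i => ?_, by rw [map_mul]⟩
    rw [Polynomial.coeff_mul]
    exact Subring.sum_mem D fun z _ => D.mul_mem (hp z.1) (hq z.2)
  neg_mem' := by
    rintro x ⟨p, hp, rfl⟩
    exact ⟨-p, fun i => by rw [Polynomial.coeff_neg]; exact D.neg_mem (hp i), by rw [map_neg]⟩

theorem polyDRing_le_intR {K : Type*} [Field K] {D : Subring K} {E : Set K}
    (hE : E ⊆ (D : Set K)) : polyDRing D ≤ IntR E D := by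
  rintro φ ⟨p, hp, rfl⟩
  intro e he
  constructor
  · rw [RatFunc.denom_algebraMap]; simp
  · have h1 : rfEval e (algebraMap (Polynomial K) (RatFunc K) p) = p.eval e := by
      rw [rfEval, RatFunc.eval_algebraMap]
      simp [eval₂_id_eq_eval]
    rw [h1]
    exact eval_mem_of_coeff_mem hp (hE he)

/-- `Int^R(E,D)` as an algebra (hence module) over `D[X]`, when `E ⊆ D`. -/
noncomputable def polyDAlgebra {K : Type*} [Field K] {D : Subring K} {E : Set K}
    (hE : E ⊆ (D : Set K)) : Algebra (polyDRing D) (IntR E D) :=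
  (Subring.inclusion (polyDRing_le_intR hE)).toAlgebra

/-! Faithful flatness makes every ideal of `D[X]` contracted from `Int^R(E,D)`, so divisibility
between elements of `D[X]` descends from `Int^R(E,D)` to `D[X]`. Since `K` is the quotient field
of `D`, every `φ ∈ Int^R(E,D)` satisfies `q φ = p` for some `p, q ∈ D[X]` with `q ≠ 0`; then
`q ∣ p` in `D[X]`, so `φ ∈ D[X]`. -/

theorem dvd_of_algebraMap_dvd_of_faithfullyFlat {R B : Type*} [CommRing R] [CommRing B]
    [Algebra R B] [Module.FaithfullyFlat R B] {p q : R}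
    (h : algebraMap R B q ∣ algebraMap R B p) : q ∣ p := by
  have hp : p ∈ ((Ideal.span {q}).map (algebraMap R B)).comap (algebraMap R B) := by
    rw [Ideal.mem_comap, Ideal.map_span, Set.image_singleton]
    exact Ideal.mem_span_singleton.2 h
  rwa [Ideal.comap_map_eq_self_of_faithfullyFlat, Ideal.mem_span_singleton] at hp

theorem mem_range_algebraMap_of_faithfullyFlat {R B : Type*} [CommRing R] [CommRing B]
    [IsDomain B] [Algebra R B] [Module.FaithfullyFlat R B] {b : B} {p q : R}
    (hq : algebraMap R B q ≠ 0) (h : algebraMap R B q * b = algebraMap R B p) :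
    b ∈ (algebraMap R B).range := by
  obtain ⟨a, rfl⟩ := dvd_of_algebraMap_dvd_of_faithfullyFlat ⟨b, h.symm⟩
  refine ⟨a, mul_left_cancel₀ hq ?_⟩
  rw [h, map_mul]

theorem Module.FaithfullyFlat.of_bijective_algebraMap {R B : Type*} [CommRing R] [CommRing B]
    [Algebra R B] (h : Function.Bijective (algebraMap R B)) : Module.FaithfullyFlat R B :=
  .of_linearEquiv R R (LinearEquiv.ofBijective (Algebra.linearMap R B) h).symm

theorem Subring.eq_of_faithfullyFlat_inclusion {L : Type*} [Field L] {R B : Subring L}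
    (hRB : R ≤ B) [hFF : @Module.FaithfullyFlat R B _ _ (Subring.inclusion hRB).toAlgebra.toModule]
    (hfrac : ∀ x ∈ B, ∃ p ∈ R, ∃ q ∈ R, q ≠ 0 ∧ q * x = p) : R = B := by
  let _ := (Subring.inclusion hRB).toAlgebra
  refine le_antisymm hRB fun x hx => ?_
  obtain ⟨p, hp, q, hq, hq0, hqx⟩ := hfrac x hx
  obtain ⟨a, ha⟩ := mem_range_algebraMap_of_faithfullyFlat (R := R) (B := B)
    (b := ⟨x, hx⟩) (p := ⟨p, hp⟩) (q := ⟨q, hq⟩) (Subtype.coe_ne_coe.1 hq0) (Subtype.ext hqx)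
  have hax : (a : L) = x := congrArg Subtype.val ha
  exact hax ▸ a.2

theorem isFractionRing_of_isQuotField {D : Subring K} (hFrac : IsQuotField D) :
    IsFractionRing D K :=
  IsFractionRing.of_field D K fun z => by
    obtain ⟨a, ha, b, hb, -, rfl⟩ := hFrac z
    exact ⟨⟨a, ha⟩, ⟨b, hb⟩, rfl⟩

theorem algebraMap_map_mem_polyDRing (D : Subring K) (p : D[X]) :
    algebraMap K[X] (RatFunc K) (p.map (algebraMap D K)) ∈ polyDRing D :=
  ⟨_, fun i => by rw [coeff_map]; exact (p.coeff i).2, rfl⟩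

theorem exists_C_mul_mem_polyDRing {D : Subring K} (hFrac : IsQuotField D) (f : K[X]) :
    ∃ d ∈ D, d ≠ 0 ∧ algebraMap K[X] (RatFunc K) (C d * f) ∈ polyDRing D := by
  have := isFractionRing_of_isQuotField hFrac
  obtain ⟨b, hb, hbf⟩ := IsLocalization.integerNormalization_spec (nonZeroDivisors D) f
  refine ⟨b, b.2, by exact_mod_cast nonZeroDivisors.ne_zero hb, ?_⟩
  rw [← smul_eq_C_mul, ← Subring.smul_def, ← hbf]
  exact algebraMap_map_mem_polyDRing D _

theorem exists_mul_eq_of_isQuotField {D : Subring K} (hFrac : IsQuotField D) (φ : RatFunc K) :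
    ∃ p ∈ polyDRing D, ∃ q ∈ polyDRing D, q ≠ 0 ∧ q * φ = p := by
  obtain ⟨a, ha, ha0, hnum⟩ := exists_C_mul_mem_polyDRing hFrac φ.num
  obtain ⟨b, hb, hb0, hdenom⟩ := exists_C_mul_mem_polyDRing hFrac φ.denom
  have hC : ∀ d ∈ D, algebraMap K[X] (RatFunc K) (C d) ∈ polyDRing D := fun d hd =>
    ⟨C d, fun i => by rw [coeff_C]; split_ifs; exacts [hd, D.zero_mem], rfl⟩
  refine ⟨_, mul_mem (hC b hb) hnum, _, mul_mem (hC a ha) hdenom, ?_, ?_⟩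
  · simp [ha0, hb0, φ.denom_ne_zero]
  · have hden : algebraMap K[X] (RatFunc K) φ.denom ≠ 0 := by simp [φ.denom_ne_zero]
    have hφ : algebraMap K[X] (RatFunc K) φ.num = φ * algebraMap K[X] (RatFunc K) φ.denom :=
      (div_eq_iff hden).mp φ.num_div_denom
    simp only [map_mul, hφ]
    ring

theorem intR_faithfullyFlat_over_polyD_iff_general {K : Type*} [Field K] (D : Subring K) (E : Set K)
    (hFrac : IsQuotField D) (hE : E ⊆ (D : Set K)) :
    @Module.FaithfullyFlat (polyDRing D) (IntR E D) _ _ (polyDAlgebra hE).toModule ↔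
      polyDRing D = IntR E D := by
  let _ := polyDAlgebra hE
  refine ⟨fun hFF => Subring.eq_of_faithfullyFlat_inclusion (hFF := hFF) (polyDRing_le_intR hE)
    fun φ _ => exists_mul_eq_of_isQuotField hFrac φ, fun h => ?_⟩
  refine .of_bijective_algebraMap ⟨Subring.inclusion_injective _, fun φ => ?_⟩
  exact ⟨⟨φ, h.ge φ.2⟩, rfl⟩

/-- for `E ⊆ D`, `Int^R(E,D)` is faithfully flat as a `D[X]`-module iff
`Int^R(E,D) = D[X]`. -/
theorem intR_faithfullyFlat_over_polyD_iff {K : Type*} [Field K] (D : Subring K) (E : Set K)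
    (hFrac : IsQuotField D) (hEne : E.Nonempty) (hE : E ⊆ (D : Set K)) :
    @Module.FaithfullyFlat (polyDRing D) (IntR E D) _ _ (polyDAlgebra hE).toModule ↔
      polyDRing D = IntR E D :=
  intR_faithfullyFlat_over_polyD_iff_general D E hFrac hE
end
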